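/- arXiv:1901.05881 — 3 statements merged into one kernel-verified Lean document; each statement's English description precedes it below -/
import Mathlib

section
/- Abstract max–mini principle (the Hilbert-space core of the paper's Max–mini Principle, Lemma 2.3, for the Kohn Laplacian): In the abstract eigenvalue setting described below, for every integer k ≥ 1 one has λ_k = inf{ Λ(L) : L ⊆ D a complex-linear subspace with dim_ℂ L = k and L ∩ ker T = {0} }. -/
set_option linter.unusedSectionVars false

section Aux
variable {H : Type*} [NormedAddCommGroup H] [InnerProductSpace ℂ H] [CompleteSpace H]
  {e : ℕ+ → H} {lam : ℕ+ → ℝ} {D : Submodule ℂ H} {T : D →ₗ[ℂ] H}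

lemma coeffA (he : Orthonormal ℂ e)
    (hT : ∀ f : D, HasSum (fun j : ℕ+ => ((lam j : ℂ) * (inner ℂ (e j) (f : H) : ℂ)) • e j) (T f))
    (f : D) (i : ℕ+) :
    (inner ℂ (e i) (T f) : ℂ) = (lam i : ℂ) * inner ℂ (e i) (f : H) := by
  have h1 := (innerSL ℂ (e i)).hasSum (hT f)
  have h2 : HasSum (fun j : ℕ+ => if j = i then (lam i : ℂ) * inner ℂ (e i) (f : H) else 0)
      ((lam i : ℂ) * inner ℂ (e i) (f : H)) := hasSum_ite_eq i _
  refine h1.unique (h2.congr_fun ?_)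
  intro j
  by_cases h : j = i
  · subst h; simp [inner_smul_right, orthonormal_iff_ite.mp he j j, he.1 j]
  · simp [h, inner_smul_right, orthonormal_iff_ite.mp he i j, Ne.symm h]

lemma energyB
    (hT : ∀ f : D, HasSum (fun j : ℕ+ => ((lam j : ℂ) * (inner ℂ (e j) (f : H) : ℂ)) • e j) (T f))
    (f : D) :
    HasSum (fun j : ℕ+ => lam j * ‖(inner ℂ (e j) (f : H) : ℂ)‖ ^ 2)
      ((inner ℂ (f : H) (T f) : ℂ)).re := by
  have h1 := Complex.reCLM.hasSum ((innerSL ℂ ((f : H))).hasSum (hT f))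
  refine h1.congr_fun fun j => ?_
  simp only [innerSL_apply_apply, inner_smul_right, Complex.reCLM_apply]
  rw [← inner_conj_symm ((f : H)) (e j), mul_assoc, Complex.mul_conj]
  rw [← Complex.ofReal_mul, Complex.ofReal_re, Complex.normSq_eq_norm_sq]

lemma energyC (he : Orthonormal ℂ e)
    (hT : ∀ f : D, HasSum (fun j : ℕ+ => ((lam j : ℂ) * (inner ℂ (e j) (f : H) : ℂ)) • e j) (T f))
    (f : D) :
    HasSum (fun j : ℕ+ => (lam j) ^ 2 * ‖(inner ℂ (e j) (f : H) : ℂ)‖ ^ 2) (‖T f‖ ^ 2) := by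
  have h1 := Complex.reCLM.hasSum ((innerSL ℂ (T f)).hasSum (hT f))
  have h2 : Complex.reCLM ((innerSL ℂ (T f)) (T f)) = ‖T f‖ ^ 2 := by
    simp only [innerSL_apply_apply, Complex.reCLM_apply]
    rw [inner_self_eq_norm_sq_to_K]
    simp [← Complex.ofReal_pow]
  rw [h2] at h1
  refine h1.congr_fun fun j => ?_
  simp only [innerSL_apply_apply, inner_smul_right, Complex.reCLM_apply]
  rw [← inner_conj_symm (T f) (e j), coeffA he hT f j, mul_assoc, map_mul]
  set z : ℂ := inner ℂ (e j) ((f : D) : H) with hz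
  have h3 : ((lam j : ℂ) * (z * ((starRingEnd ℂ) (lam j : ℂ) * (starRingEnd ℂ) z)))
      = (((lam j) ^ 2 * ‖z‖ ^ 2 : ℝ) : ℂ) := by
    rw [Complex.conj_ofReal]
    rw [show ((lam j : ℂ) * (z * ((lam j : ℂ) * (starRingEnd ℂ) z)))
      = ((lam j : ℂ) * (lam j : ℂ)) * (z * (starRingEnd ℂ) z) by ring, Complex.mul_conj]
    rw [Complex.normSq_eq_norm_sq]
    push_cast
    ring
  rw [h3, Complex.ofReal_re]

lemma kerT (he : Orthonormal ℂ e) (hpos : ∀ j, 0 < lam j)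
    (hT : ∀ f : D, HasSum (fun j : ℕ+ => ((lam j : ℂ) * (inner ℂ (e j) (f : H) : ℂ)) • e j) (T f))
    (f : D) :
    T f = 0 ↔ ∀ j, (inner ℂ (e j) (f : H) : ℂ) = 0 := by
  constructor
  · intro h j
    have := coeffA he hT f j
    rw [h, inner_zero_right] at this
    have hl : (lam j : ℂ) ≠ 0 := by exact_mod_cast (hpos j).ne'
    field_simp at this
    exact (mul_eq_zero.mp this.symm).resolve_left hl
  · intro h
    have h2 : HasSum (fun j : ℕ+ => ((lam j : ℂ) * (inner ℂ (e j) (f : H) : ℂ)) • e j) 0 := by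
      have : (fun j : ℕ+ => ((lam j : ℂ) * (inner ℂ (e j) (f : H) : ℂ)) • e j) = fun _ => 0 := by
        funext j; rw [h j]; simp
      rw [this]; exact hasSum_zero
    exact (hT f).unique h2

lemma posB (he : Orthonormal ℂ e) (hpos : ∀ j, 0 < lam j)
    (hT : ∀ f : D, HasSum (fun j : ℕ+ => ((lam j : ℂ) * (inner ℂ (e j) (f : H) : ℂ)) • e j) (T f))
    (f : D) (hf : T f ≠ 0) :
    0 < ((inner ℂ (f : H) (T f) : ℂ)).re := by
  obtain ⟨j0, hj0⟩ : ∃ j, (inner ℂ (e j) (f : H) : ℂ) ≠ 0 := by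
    by_contra h
    push_neg at h
    exact hf ((kerT he hpos hT f).mpr h)
  have hB := energyB hT f
  have h1 : lam j0 * ‖(inner ℂ (e j0) (f : H) : ℂ)‖ ^ 2 ≤ ((inner ℂ (f : H) (T f) : ℂ)).re :=
    le_hasSum hB j0 fun j _ => mul_nonneg (hpos j).le (by positivity)
  have h2 : 0 < lam j0 * ‖(inner ℂ (e j0) (f : H) : ℂ)‖ ^ 2 := by
    have := hpos j0
    have : (0:ℝ) < ‖(inner ℂ (e j0) (f : H) : ℂ)‖ := norm_pos_iff.mpr hj0
    positivity
  linarith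
end Aux

section Aux2
variable {H : Type*} [NormedAddCommGroup H] [InnerProductSpace ℂ H]

lemma spanCoeff {e : ℕ+ → H} (he : Orthonormal ℂ e) (s : Set ℕ+) (x : H)
    (hx : x ∈ Submodule.span ℂ (e '' s)) (j : ℕ+) (hj : j ∉ s) :
    (inner ℂ (e j) x : ℂ) = 0 := by
  have hle : Submodule.span ℂ (e '' s) ≤ LinearMap.ker (innerSL ℂ (e j) : H →ₗ[ℂ] ℂ) := by
    rw [Submodule.span_le]
    rintro _ ⟨i, hi, rfl⟩
    have : i ≠ j := fun h => hj (h ▸ hi)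
    simp only [SetLike.mem_coe, LinearMap.mem_ker]
    simpa [orthonormal_iff_ite.mp he j i] using (Ne.symm this)
  exact hle hx

lemma eq_zero_of_inner_span (S : Set H) (x : H) (hx : x ∈ Submodule.span ℂ S)
    (h : ∀ y ∈ S, (inner ℂ x y : ℂ) = 0) : x = 0 := by
  have hle : Submodule.span ℂ S ≤ LinearMap.ker (innerSL ℂ x : H →ₗ[ℂ] ℂ) := by
    rw [Submodule.span_le]
    intro y hy
    simpa using h y hy
  have : (inner ℂ x x : ℂ) = 0 := hle hx
  exact inner_self_eq_zero.mp this
end Aux2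

section Aux3
variable {H : Type*} [NormedAddCommGroup H] [InnerProductSpace ℂ H]
  {D : Submodule ℂ H} (T : D →ₗ[ℂ] H)

lemma quotSmul (f : D) (a : ℂ) (ha : a ≠ 0) :
    ‖T (a • f)‖ ^ 2 / (inner ℂ ((a • f : D) : H) (T (a • f)) : ℂ).re
      = ‖T f‖ ^ 2 / (inner ℂ (f : H) (T f) : ℂ).re := by
  have hco : ((a • f : D) : H) = a • (f : H) := rfl
  rw [map_smul, hco, norm_smul, inner_smul_left, inner_smul_right]
  rw [← mul_assoc, mul_comm ((starRingEnd ℂ) a) a, Complex.mul_conj, mul_pow,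
    Complex.re_ofReal_mul, Complex.normSq_eq_norm_sq]
  have hna : ‖a‖ ^ 2 ≠ 0 := pow_ne_zero _ (norm_ne_zero_iff.mpr ha)
  rw [mul_div_mul_left _ _ hna]
end Aux3

/-- Abstract max–mini principle for the Kohn Laplacian (Lemma 2.3):
in the abstract eigenvalue setting, for every `k ≥ 1`,
`λ_k = inf { Λ(L) : L ⊆ D, dim_ℂ L = k, L ∩ ker T = {0} }`. -/
theorem abstract_max_mini_principle
    {H : Type*} [NormedAddCommGroup H] [InnerProductSpace ℂ H] [CompleteSpace H]
    (e : ℕ+ → H) (he : Orthonormal ℂ e)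
    (lam : ℕ+ → ℝ) (hpos : ∀ j, 0 < lam j) (hmono : Monotone lam)
    (D : Submodule ℂ H) (heD : ∀ j, e j ∈ D)
    (T : D →ₗ[ℂ] H)
    (hT : ∀ f : D, HasSum (fun j : ℕ+ => ((lam j : ℂ) * (inner ℂ (e j) (f : H) : ℂ)) • e j) (T f))
    (k : ℕ+) :
    lam k = sInf { L : ℝ | ∃ Lk : Submodule ℂ D,
        Module.finrank ℂ Lk = (k : ℕ) ∧ Lk ⊓ LinearMap.ker T = ⊥ ∧
        L = sSup { q : ℝ | ∃ f : D, f ∈ Lk ∧ f ≠ 0 ∧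
            q = ‖T f‖ ^ 2 / (inner ℂ ((f : D) : H) (T f) : ℂ).re } } := by
  classical
  -- general: nonzero elements of subspaces trivially meeting ker have T f ≠ 0
  have hTne : ∀ (Lk : Submodule ℂ D), Lk ⊓ LinearMap.ker T = ⊥ →
      ∀ f : D, f ∈ Lk → f ≠ 0 → T f ≠ 0 := by
    intro Lk h f hf hf0 hTf
    have hm : f ∈ Lk ⊓ LinearMap.ker T := ⟨hf, LinearMap.mem_ker.mpr hTf⟩
    rw [h, Submodule.mem_bot] at hm
    exact hf0 hm
  -- Part I : the span of e_1, ..., e_k witnesses lam k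
  set idx : Fin (k : ℕ) → ℕ+ := fun i => ⟨(i : ℕ) + 1, Nat.succ_pos _⟩ with hidx
  have hidxinj : Function.Injective idx := by
    intro a b h
    have h2 : ((idx a : ℕ+) : ℕ) = ((idx b : ℕ+) : ℕ) := by rw [h]
    simp only [hidx, PNat.mk_coe] at h2
    exact Fin.ext (by omega)
  have hidxle : ∀ i, idx i ≤ k := by
    intro i
    rw [← PNat.coe_le_coe]
    exact i.2
  set E : Fin (k : ℕ) → D := fun i => ⟨e (idx i), heD _⟩ with hE
  have hEli : LinearIndependent ℂ E := by
    apply LinearIndependent.of_comp D.subtype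
    have : (⇑D.subtype ∘ E) = e ∘ idx := rfl
    rw [this]
    exact (he.linearIndependent).comp idx hidxinj
  set L0 : Submodule ℂ D := Submodule.span ℂ (Set.range E) with hL0
  have hdim0 : Module.finrank ℂ L0 = (k : ℕ) := by
    rw [hL0, finrank_span_eq_card hEli, Fintype.card_fin]
  have hcoe0 : ∀ f : D, f ∈ L0 → (f : H) ∈ Submodule.span ℂ (e '' {j : ℕ+ | j ≤ k}) := by
    intro f hf
    have h1 : (f : H) ∈ Submodule.map D.subtype L0 := ⟨f, hf, rfl⟩
    rw [hL0, Submodule.map_span] at h1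
    refine Submodule.span_mono ?_ h1
    rintro _ ⟨_, ⟨i, rfl⟩, rfl⟩
    exact ⟨idx i, hidxle i, rfl⟩
  have hc0 : ∀ f : D, f ∈ L0 → ∀ j : ℕ+, ¬ j ≤ k → (inner ℂ (e j) (f : H) : ℂ) = 0 := by
    intro f hf j hj
    exact spanCoeff he _ _ (hcoe0 f hf) j hj
  have hker0 : L0 ⊓ LinearMap.ker T = ⊥ := by
    rw [eq_bot_iff]
    rintro f ⟨hf1, hf2⟩
    have hTf0 : T f = 0 := hf2
    have hall := (kerT he hpos hT f).mp hTf0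
    show f ∈ (⊥ : Submodule ℂ D)
    rw [Submodule.mem_bot]
    have : (f : H) = 0 := by
      refine eq_zero_of_inner_span _ _ (hcoe0 f hf1) ?_
      rintro _ ⟨j, _, rfl⟩
      rw [← inner_conj_symm (𝕜 := ℂ), hall j, map_zero]
    exact Subtype.ext this
  -- the distinguished element f0 = e_k
  have hkpos : 0 < (k : ℕ) := k.2
  set i0 : Fin (k : ℕ) := ⟨(k : ℕ) - 1, by omega⟩ with hi0
  have hidx0 : idx i0 = k := by
    apply Subtype.ext
    show ((k : ℕ) - 1) + 1 = (k : ℕ)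
    omega
  set f0 : D := ⟨e k, heD k⟩ with hf0
  have hf0mem : f0 ∈ L0 := by
    apply Submodule.subset_span
    refine ⟨i0, ?_⟩
    apply Subtype.ext
    simp [hE, hidx0, hf0]
  have hf0ne : f0 ≠ 0 := by
    intro h
    exact he.ne_zero k (congrArg Subtype.val h)
  have hc0f0 : ∀ j : ℕ+, (inner ℂ (e j) ((f0 : D) : H) : ℂ) = if j = k then 1 else 0 := by
    intro j
    simpa [hf0] using orthonormal_iff_ite.mp he j k
  have hB0 : ((inner ℂ ((f0 : D) : H) (T f0) : ℂ)).re = lam k := by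
    refine (energyB hT f0).unique ?_
    have heq : (fun j : ℕ+ => lam j * ‖(inner ℂ (e j) ((f0 : D) : H) : ℂ)‖ ^ 2)
        = fun j : ℕ+ => if j = k then lam k else 0 := by
      funext j
      rw [hc0f0 j]
      by_cases h : j = k <;> simp [h]
    rw [heq]
    exact hasSum_ite_eq k _
  have hC0 : ‖T f0‖ ^ 2 = lam k ^ 2 := by
    refine (energyC he hT f0).unique ?_
    have heq : (fun j : ℕ+ => (lam j) ^ 2 * ‖(inner ℂ (e j) ((f0 : D) : H) : ℂ)‖ ^ 2)
        = fun j : ℕ+ => if j = k then (lam k) ^ 2 else 0 := by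
      funext j
      rw [hc0f0 j]
      by_cases h : j = k <;> simp [h]
    rw [heq]
    exact hasSum_ite_eq k _
  have hq0 : ‖T f0‖ ^ 2 / ((inner ℂ ((f0 : D) : H) (T f0) : ℂ)).re = lam k := by
    rw [hC0, hB0, sq, mul_div_assoc, div_self (hpos k).ne', mul_one]
  -- upper bound over L0
  have hub0 : ∀ f : D, f ∈ L0 → f ≠ 0 →
      ‖T f‖ ^ 2 / ((inner ℂ ((f : D) : H) (T f) : ℂ)).re ≤ lam k := by
    intro f hf hfne
    have hTfne : T f ≠ 0 := hTne L0 hker0 f hf hfne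
    have hd : 0 < ((inner ℂ ((f : D) : H) (T f) : ℂ)).re := posB he hpos hT f hTfne
    have hle : ‖T f‖ ^ 2 ≤ lam k * ((inner ℂ ((f : D) : H) (T f) : ℂ)).re := by
      refine hasSum_le (fun j => ?_) (energyC he hT f) ((energyB hT f).mul_left (lam k))
      by_cases hcj : (inner ℂ (e j) ((f : D) : H) : ℂ) = 0
      · simp [hcj]
      · have hjk : j ≤ k := by
          by_contra h
          exact hcj (hc0 f hf j h)
        have hlk : lam j ≤ lam k := hmono hjk
        have h0 : (0:ℝ) ≤ ‖(inner ℂ (e j) ((f : D) : H) : ℂ)‖ ^ 2 := by positivity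
        have hlj : 0 < lam j := hpos j
        calc lam j ^ 2 * ‖(inner ℂ (e j) ((f : D) : H) : ℂ)‖ ^ 2
            = lam j * (lam j * ‖(inner ℂ (e j) ((f : D) : H) : ℂ)‖ ^ 2) := by ring
          _ ≤ lam k * (lam j * ‖(inner ℂ (e j) ((f : D) : H) : ℂ)‖ ^ 2) :=
              mul_le_mul_of_nonneg_right hlk (mul_nonneg hlj.le h0)
    rw [div_le_iff₀ hd]
    linarith
  -- membership of lam k in the outer set
  have hmemS : lam k ∈ { L : ℝ | ∃ Lk : Submodule ℂ D,
      Module.finrank ℂ Lk = (k : ℕ) ∧ Lk ⊓ LinearMap.ker T = ⊥ ∧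
      L = sSup { q : ℝ | ∃ f : D, f ∈ Lk ∧ f ≠ 0 ∧
          q = ‖T f‖ ^ 2 / (inner ℂ ((f : D) : H) (T f) : ℂ).re } } := by
    refine ⟨L0, hdim0, hker0, ?_⟩
    have hmemQ : lam k ∈ { q : ℝ | ∃ f : D, f ∈ L0 ∧ f ≠ 0 ∧
        q = ‖T f‖ ^ 2 / (inner ℂ ((f : D) : H) (T f) : ℂ).re } :=
      ⟨f0, hf0mem, hf0ne, hq0.symm⟩
    have hubQ : ∀ q ∈ { q : ℝ | ∃ f : D, f ∈ L0 ∧ f ≠ 0 ∧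
        q = ‖T f‖ ^ 2 / (inner ℂ ((f : D) : H) (T f) : ℂ).re }, q ≤ lam k := by
      rintro q ⟨f, hf, hfne, rfl⟩
      exact hub0 f hf hfne
    exact (le_antisymm (csSup_le ⟨lam k, hmemQ⟩ hubQ) (le_csSup ⟨lam k, hubQ⟩ hmemQ)).symm
  -- Part II : lower bound
  have hlow : ∀ L ∈ { L : ℝ | ∃ Lk : Submodule ℂ D,
      Module.finrank ℂ Lk = (k : ℕ) ∧ Lk ⊓ LinearMap.ker T = ⊥ ∧
      L = sSup { q : ℝ | ∃ f : D, f ∈ Lk ∧ f ≠ 0 ∧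
          q = ‖T f‖ ^ 2 / (inner ℂ ((f : D) : H) (T f) : ℂ).re } }, lam k ≤ L := by
    rintro L ⟨Lk, hdim, hker, rfl⟩
    haveI : FiniteDimensional ℂ Lk := FiniteDimensional.of_finrank_pos (by rw [hdim]; exact k.2)
    haveI : Nontrivial Lk := Module.nontrivial_of_finrank_pos (R := ℂ) (by rw [hdim]; exact k.2)
    -- the quotient set
    set Q : Set ℝ := { q : ℝ | ∃ f : D, f ∈ Lk ∧ f ≠ 0 ∧
        q = ‖T f‖ ^ 2 / (inner ℂ ((f : D) : H) (T f) : ℂ).re } with hQ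
    -- Q is bounded above via compactness of the unit sphere
    set TL : Lk →ₗ[ℂ] H := T ∘ₗ Lk.subtype with hTL
    have hTLc : Continuous TL := TL.continuous_of_finiteDimensional
    set J : Lk →ₗ[ℂ] H := D.subtype ∘ₗ Lk.subtype with hJ
    have hJc : Continuous J := J.continuous_of_finiteDimensional
    set g : Lk → ℝ := fun x => ‖TL x‖ ^ 2 / ((inner ℂ (J x) (TL x) : ℂ)).re with hg
    have hgnum : Continuous fun x : Lk => ‖TL x‖ ^ 2 := (hTLc.norm).pow 2
    have hgden : Continuous fun x : Lk => ((inner ℂ (J x) (TL x) : ℂ)).re :=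
      Complex.continuous_re.comp (hJc.inner hTLc)
    have hdenpos : ∀ x : Lk, x ≠ 0 → 0 < ((inner ℂ (J x) (TL x) : ℂ)).re := by
      intro x hx
      have hxD : (x : D) ≠ 0 := fun h => hx (Subtype.ext h)
      have hTfne : T (x : D) ≠ 0 := hTne Lk hker (x : D) x.2 hxD
      exact posB he hpos hT (x : D) hTfne
    have hsph : IsCompact (Metric.sphere (0 : Lk) 1) := isCompact_sphere _ _
    have hsphne : (Metric.sphere (0 : Lk) 1).Nonempty := NormedSpace.sphere_nonempty.mpr zero_le_one
    have hsphx : ∀ x ∈ Metric.sphere (0 : Lk) 1, x ≠ 0 := by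
      intro x hx h0
      rw [mem_sphere_zero_iff_norm] at hx
      rw [h0] at hx
      simp at hx
    have hgcont : ContinuousOn g (Metric.sphere (0 : Lk) 1) :=
      ContinuousOn.div hgnum.continuousOn hgden.continuousOn
        (fun x hx => (hdenpos x (hsphx x hx)).ne')
    obtain ⟨x₀, hx₀, hmax⟩ := hsph.exists_isMaxOn hsphne hgcont
    have hbdd : BddAbove Q := by
      refine ⟨g x₀, ?_⟩
      rintro q ⟨f, hf, hfne, rfl⟩
      have hfn : ‖f‖ ≠ 0 := norm_ne_zero_iff.mpr hfne
      set a : ℂ := ((‖f‖⁻¹ : ℝ) : ℂ) with ha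
      have ha0 : a ≠ 0 := by
        rw [ha]
        exact_mod_cast inv_ne_zero hfn
      set y : Lk := a • (⟨f, hf⟩ : Lk) with hy
      have hyD : (y : D) = a • f := rfl
      have hysph : y ∈ Metric.sphere (0 : Lk) 1 := by
        rw [mem_sphere_zero_iff_norm]
        have h1 : ‖a‖ = ‖f‖⁻¹ := by
          rw [ha, Complex.norm_real, Real.norm_eq_abs, abs_of_nonneg (by positivity)]
        calc ‖y‖ = ‖a • f‖ := by rw [← hyD]; rfl
          _ = ‖a‖ * ‖f‖ := norm_smul _ _
          _ = 1 := by rw [h1, inv_mul_cancel₀ hfn]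
      have hgy : g y = ‖T f‖ ^ 2 / ((inner ℂ ((f : D) : H) (T f) : ℂ)).re := by
        have h1 : g y = ‖T (a • f)‖ ^ 2 / ((inner ℂ ((a • f : D) : H) (T (a • f)) : ℂ)).re := by
          rfl
        rw [h1, quotSmul T f a ha0]
      rw [← hgy]
      exact hmax hysph
    -- find a good vector in Lk with small coefficients vanishing
    set m : ℕ := (k : ℕ) - 1 with hm
    set ψ : Lk →ₗ[ℂ] (Fin m → ℂ) := LinearMap.pi
      (fun i => (innerₛₗ ℂ (e ⟨(i : ℕ) + 1, Nat.succ_pos _⟩)) ∘ₗ (D.subtype ∘ₗ Lk.subtype))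
      with hψ
    have hψni : ¬ Function.Injective ψ := by
      intro hinj
      have h1 := LinearMap.finrank_le_finrank_of_injective hinj
      rw [hdim, Module.finrank_fin_fun] at h1
      omega
    have hker' : LinearMap.ker ψ ≠ ⊥ := fun h => hψni (LinearMap.ker_eq_bot.mp h)
    obtain ⟨x, hxker, hxne⟩ := (Submodule.ne_bot_iff _).mp hker'
    have hfLk : (x : D) ∈ Lk := x.2
    have hfne : (x : D) ≠ 0 := fun h => hxne (Subtype.ext h)
    have hcsmall : ∀ j : ℕ+, j < k → (inner ℂ (e j) (((x : D) : D) : H) : ℂ) = 0 := by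
      intro j hj
      have hjk : (j : ℕ) < (k : ℕ) := hj
      have hji : (j : ℕ) - 1 < m := by
        have h1 : 1 ≤ (j : ℕ) := j.2
        rw [hm]
        omega
      have happ : ψ x ⟨(j : ℕ) - 1, hji⟩ = 0 := by
        rw [LinearMap.mem_ker.mp hxker]
        rfl
      have hjeq : (⟨((j : ℕ) - 1) + 1, Nat.succ_pos _⟩ : ℕ+) = j := by
        apply Subtype.ext
        have h1 : 1 ≤ (j : ℕ) := j.2
        show ((j : ℕ) - 1) + 1 = (j : ℕ)
        omega
      rw [hψ] at happ
      simp only [LinearMap.pi_apply, LinearMap.comp_apply] at happ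
      rw [← hjeq]
      exact happ
    -- the Rayleigh quotient of x is at least lam k
    have hTfne : T (x : D) ≠ 0 := hTne Lk hker (x : D) hfLk hfne
    have hd : 0 < ((inner ℂ (((x : D) : D) : H) (T (x : D)) : ℂ)).re := posB he hpos hT (x : D) hTfne
    have hge : lam k * ((inner ℂ (((x : D) : D) : H) (T (x : D)) : ℂ)).re ≤ ‖T (x : D)‖ ^ 2 := by
      refine hasSum_le (fun j => ?_) ((energyB hT (x : D)).mul_left (lam k)) (energyC he hT (x : D))
      by_cases hcj : (inner ℂ (e j) (((x : D) : D) : H) : ℂ) = 0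
      · simp [hcj]
      · have hjk : k ≤ j := by
          by_contra h
          exact hcj (hcsmall j (lt_of_not_ge h))
        have hlk : lam k ≤ lam j := hmono hjk
        have h0 : (0:ℝ) ≤ ‖(inner ℂ (e j) (((x : D) : D) : H) : ℂ)‖ ^ 2 := by positivity
        have hlj : 0 < lam j := hpos j
        calc lam k * (lam j * ‖(inner ℂ (e j) (((x : D) : D) : H) : ℂ)‖ ^ 2)
            ≤ lam j * (lam j * ‖(inner ℂ (e j) (((x : D) : D) : H) : ℂ)‖ ^ 2) :=
              mul_le_mul_of_nonneg_right hlk (mul_nonneg hlj.le h0)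
          _ = lam j ^ 2 * ‖(inner ℂ (e j) (((x : D) : D) : H) : ℂ)‖ ^ 2 := by ring
    have hq : lam k ≤ ‖T (x : D)‖ ^ 2 / ((inner ℂ (((x : D) : D) : H) (T (x : D)) : ℂ)).re := by
      rw [le_div_iff₀ hd]
      linarith
    have hmemQ : ‖T (x : D)‖ ^ 2 / ((inner ℂ (((x : D) : D) : H) (T (x : D)) : ℂ)).re ∈ Q :=
      ⟨(x : D), hfLk, hfne, rfl⟩
    exact hq.trans (le_csSup hbdd hmemQ)
  -- conclude
  have hSne : { L : ℝ | ∃ Lk : Submodule ℂ D,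
      Module.finrank ℂ Lk = (k : ℕ) ∧ Lk ⊓ LinearMap.ker T = ⊥ ∧
      L = sSup { q : ℝ | ∃ f : D, f ∈ Lk ∧ f ≠ 0 ∧
          q = ‖T f‖ ^ 2 / (inner ℂ ((f : D) : H) (T f) : ℂ).re } }.Nonempty := ⟨lam k, hmemS⟩
  exact le_antisymm (le_csInf hSne hlow) (csInf_le ⟨lam k, hlow⟩ hmemS)
end

section
/- Lower-bound step of the abstract max–mini principle: In the abstract eigenvalue setting described below, fix k ≥ 1. For every complex-linear subspace L ⊆ D with dim_ℂ L = k and L ∩ ker T = {0}, one has Λ(L) ≥ λ_k; equivalently, there is no k-dimensional subspace L ⊆ D with L ∩ ker T = {0} and ‖T f‖² < λ_k · ⟨T f, f⟩ uniformly (i.e. with Λ(L) < λ_k). -/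
/-- Lower-bound step of the abstract max–mini principle: for every subspace
`L ⊆ D` with `dim_ℂ L = k` and `L ∩ ker T = {0}`, one has `Λ(L) ≥ λ_k`. -/
theorem abstract_max_mini_lower_bound
    {H : Type*} [NormedAddCommGroup H] [InnerProductSpace ℂ H] [CompleteSpace H]
    (e : ℕ+ → H) (he : Orthonormal ℂ e)
    (lam : ℕ+ → ℝ) (hpos : ∀ j, 0 < lam j) (hmono : Monotone lam)
    (D : Submodule ℂ H) (heD : ∀ j, e j ∈ D)
    (T : D →ₗ[ℂ] H)
    (hT : ∀ f : D, HasSum (fun j : ℕ+ => ((lam j : ℂ) * (inner ℂ (e j) (f : H) : ℂ)) • e j) (T f))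
    (k : ℕ+) :
    ∀ Lk : Submodule ℂ D, Module.finrank ℂ Lk = (k : ℕ) → Lk ⊓ LinearMap.ker T = ⊥ →
      lam k ≤ sSup { q : ℝ | ∃ f : D, f ∈ Lk ∧ f ≠ 0 ∧
        q = ‖T f‖ ^ 2 / (inner ℂ ((f : D) : H) (T f) : ℂ).re } := by
  intro Lk hrank hker
  haveI : FiniteDimensional ℂ Lk :=
    FiniteDimensional.of_finrank_pos (by rw [hrank]; exact k.pos)
  set c : D → ℕ+ → ℂ := fun f j => inner ℂ (e j) (f : H) with hcdef
  -- (1) coefficients of T f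
  have h1 : ∀ (f : D) (j : ℕ+), (inner ℂ (e j) (T f) : ℂ) = (lam j : ℂ) * c f j := by
    intro f j
    have hs := (innerSL ℂ (e j)).hasSum (hT f)
    have hs' : HasSum (fun i : ℕ+ => if i = j then (lam j : ℂ) * c f j else 0)
        (inner ℂ (e j) (T f)) := by
      refine hs.congr_fun fun i => ?_
      simp only [innerSL_apply_apply, inner_smul_right]
      rcases eq_or_ne i j with rfl | hij
      · simp [orthonormal_iff_ite.mp he i i, he.1 i, hcdef]
      · simp [orthonormal_iff_ite.mp he j i, Ne.symm hij, hij]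
    exact hs'.unique (hasSum_ite_eq j _)
  -- (2) denominator as a sum
  have h2 : ∀ f : D, HasSum (fun j : ℕ+ => lam j * ‖c f j‖ ^ 2)
      ((inner ℂ ((f : D) : H) (T f) : ℂ).re) := by
    intro f
    have hs := (innerSL ℂ ((f : D) : H)).hasSum (hT f)
    have hs' : HasSum (fun j : ℕ+ => ((lam j * ‖c f j‖ ^ 2 : ℝ) : ℂ))
        ((inner ℂ ((f : D) : H) (T f) : ℂ)) := by
      refine hs.congr_fun fun j => ?_
      simp only [innerSL_apply_apply, inner_smul_right]
      have : (inner ℂ ((f : D) : H) (e j) : ℂ) = starRingEnd ℂ (c f j) := by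
        rw [hcdef]; exact (inner_conj_symm _ _).symm
      rw [this, mul_assoc, Complex.mul_conj, Complex.normSq_eq_norm_sq]
      push_cast
      ring
    have := Complex.reCLM.hasSum hs'
    simpa only [Complex.reCLM_apply, Complex.ofReal_re] using this
  -- (3) numerator as a sum
  have h3 : ∀ f : D, HasSum (fun j : ℕ+ => (lam j) ^ 2 * ‖c f j‖ ^ 2) (‖T f‖ ^ 2) := by
    intro f
    have hs := (innerSL ℂ (T f)).hasSum (hT f)
    have hs' : HasSum (fun j : ℕ+ => (((lam j) ^ 2 * ‖c f j‖ ^ 2 : ℝ) : ℂ))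
        ((inner ℂ (T f) (T f) : ℂ)) := by
      refine hs.congr_fun fun j => ?_
      simp only [innerSL_apply_apply, inner_smul_right]
      have : (inner ℂ (T f) (e j) : ℂ) = starRingEnd ℂ ((lam j : ℂ) * c f j) := by
        rw [← h1 f j]; exact (inner_conj_symm _ _).symm
      rw [this, map_mul, Complex.conj_ofReal]
      have : (lam j : ℂ) * c f j * ((lam j : ℂ) * starRingEnd ℂ (c f j))
          = ((lam j : ℂ) * (lam j : ℂ)) * (c f j * starRingEnd ℂ (c f j)) := by ring
      rw [this, Complex.mul_conj, Complex.normSq_eq_norm_sq]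
      push_cast
      ring
    have hre : (inner ℂ (T f) (T f) : ℂ) = ((‖T f‖ : ℂ)) ^ 2 := inner_self_eq_norm_sq_to_K _
    rw [hre] at hs'
    have h := Complex.reCLM.hasSum hs'
    simpa only [Complex.reCLM_apply, Complex.ofReal_re, ← Complex.ofReal_pow] using h
  -- kernel characterization / positivity of the denominator
  have hTne : ∀ f : D, f ∈ Lk → f ≠ 0 → T f ≠ 0 := by
    intro f hfL hf0 hTf
    have : f ∈ Lk ⊓ LinearMap.ker T := ⟨hfL, hTf⟩
    rw [hker] at this
    exact hf0 this
  have hcne : ∀ f : D, T f ≠ 0 → ∃ j, c f j ≠ 0 := by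
    intro f hTf
    by_contra h
    push_neg at h
    apply hTf
    have : HasSum (fun j : ℕ+ => ((lam j : ℂ) * c f j) • e j) 0 := by
      have : (fun j : ℕ+ => ((lam j : ℂ) * c f j) • e j) = fun _ => 0 := by
        funext j; rw [h j]; simp
      rw [this]; exact hasSum_zero
    exact (hT f).unique this
  have hden : ∀ f : D, T f ≠ 0 → 0 < (inner ℂ ((f : D) : H) (T f) : ℂ).re := by
    intro f hTf
    obtain ⟨j, hj⟩ := hcne f hTf
    have hterm : 0 < lam j * ‖c f j‖ ^ 2 :=
      mul_pos (hpos j) (pow_pos (norm_pos_iff.mpr hj) 2)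
    have hle : lam j * ‖c f j‖ ^ 2 ≤ (inner ℂ ((f : D) : H) (T f) : ℂ).re :=
      le_hasSum (h2 f) j fun i _ => mul_nonneg (hpos i).le (by positivity)
    linarith
  -- the set is bounded above
  set Q : Set ℝ := { q : ℝ | ∃ f : D, f ∈ Lk ∧ f ≠ 0 ∧
        q = ‖T f‖ ^ 2 / (inner ℂ ((f : D) : H) (T f) : ℂ).re } with hQdef
  have hbdd : BddAbove Q := by
    haveI : ProperSpace Lk := FiniteDimensional.proper ℂ Lk
    haveI : Nontrivial Lk :=
      Module.nontrivial_of_finrank_pos (R := ℂ) (by rw [hrank]; exact k.pos)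
    have hsne : (Metric.sphere (0 : Lk) 1).Nonempty :=
      NormedSpace.sphere_nonempty.mpr zero_le_one
    have hsc : IsCompact (Metric.sphere (0 : Lk) 1) := isCompact_sphere _ _
    set Tres : Lk →ₗ[ℂ] H := T.comp (Lk.subtype) with hTres
    have hTcont : Continuous Tres := Tres.continuous_of_finiteDimensional
    have hNcont : Continuous fun g : Lk => ‖Tres g‖ ^ 2 :=
      (hTcont.norm).pow 2
    have hGcont : Continuous fun g : Lk => (inner ℂ (((g : D) : D) : H) (Tres g) : ℂ).re := by
      apply Complex.continuous_re.comp
      exact Continuous.inner (continuous_subtype_val.comp continuous_subtype_val) hTcont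
    obtain ⟨g0, hg0S, hg0min⟩ := hsc.exists_isMinOn hsne hGcont.continuousOn
    obtain ⟨g1, hg1S, hg1max⟩ := hsc.exists_isMaxOn hsne hNcont.continuousOn
    set m : ℝ := (inner ℂ (((g0 : D) : D) : H) (Tres g0) : ℂ).re with hm
    set M : ℝ := ‖Tres g1‖ ^ 2 with hM
    have hg0ne : (g0 : D) ≠ 0 := by
      intro h
      have : g0 = 0 := Subtype.ext h
      rw [this] at hg0S
      simp at hg0S
    have hmpos : 0 < m := hden (g0 : D) (hTne _ g0.2 hg0ne)
    have hM0 : 0 ≤ M := by positivity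
    refine ⟨M / m, ?_⟩
    rintro q ⟨f, hfL, hf0, rfl⟩
    -- normalize f
    set g : Lk := ⟨f, hfL⟩ with hg
    have hgne : g ≠ 0 := fun h => hf0 (by simpa [hg] using congrArg Subtype.val h)
    have hng : (0 : ℝ) < ‖g‖ := norm_pos_iff.mpr hgne
    set u : Lk := ((‖g‖⁻¹ : ℝ) : ℂ) • g with hu
    have hunorm : ‖u‖ = 1 := by
      have h : ‖u‖ = ‖(((‖g‖⁻¹ : ℝ) : ℂ))‖ * ‖g‖ := by rw [hu]; exact norm_smul _ _
      rw [h, Complex.norm_real, Real.norm_eq_abs, abs_of_pos (inv_pos.mpr hng),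
        inv_mul_cancel₀ hng.ne']
    have huS : u ∈ Metric.sphere (0 : Lk) 1 := mem_sphere_zero_iff_norm.mpr hunorm
    have hTu : Tres u = ((‖g‖⁻¹ : ℝ) : ℂ) • T f := by
      simp [hu, hTres, hg, map_smul]
    have hNu : ‖Tres u‖ ^ 2 = (‖g‖⁻¹) ^ 2 * ‖T f‖ ^ 2 := by
      rw [hTu, norm_smul]
      simp [abs_of_pos (inv_pos.mpr hng), mul_pow]
    have hGu : (inner ℂ (((u : D) : D) : H) (Tres u) : ℂ).re
        = (‖g‖⁻¹) ^ 2 * (inner ℂ ((f : D) : H) (T f) : ℂ).re := by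
      have hucoe : ((u : D) : H) = ((‖g‖⁻¹ : ℝ) : ℂ) • ((f : D) : H) := by
        simp [hu, hg]
      rw [hTu, hucoe, inner_smul_left, inner_smul_right, Complex.conj_ofReal]
      rw [← mul_assoc, ← Complex.ofReal_mul, Complex.re_ofReal_mul]
      ring_nf
    have hGf : 0 < (inner ℂ ((f : D) : H) (T f) : ℂ).re := hden f (hTne f hfL hf0)
    have hinv2 : 0 < (‖g‖⁻¹) ^ 2 := by positivity
    have hquot : ‖T f‖ ^ 2 / (inner ℂ ((f : D) : H) (T f) : ℂ).re
        = ‖Tres u‖ ^ 2 / (inner ℂ (((u : D) : D) : H) (Tres u) : ℂ).re := by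
      rw [hNu, hGu, mul_div_mul_left _ _ hinv2.ne']
    rw [hquot]
    have hGum : m ≤ (inner ℂ (((u : D) : D) : H) (Tres u) : ℂ).re := hg0min huS
    have hNuM : ‖Tres u‖ ^ 2 ≤ M := hg1max huS
    exact div_le_div₀ hM0 hNuM hmpos hGum
  -- find f ∈ Lk, f ≠ 0, orthogonal to e j for j < k
  set K : ℕ := (k : ℕ) with hK
  have hKpos : 0 < K := k.pos
  set φ : Lk →ₗ[ℂ] (Fin (K - 1) → ℂ) :=
    { toFun := fun g i => inner ℂ (e ⟨(i : ℕ) + 1, Nat.succ_pos _⟩) (((g : D) : D) : H)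
      map_add' := by intro g h; funext i; simp [inner_add_right]
      map_smul' := by intro a g; funext i; simp [inner_smul_right] } with hφ
  have hφnotinj : ¬ Function.Injective φ := by
    intro hinj
    have := LinearMap.finrank_le_finrank_of_injective hinj
    rw [hrank, Module.finrank_pi] at this
    simp only [Fintype.card_fin] at this
    exact absurd this (not_le.mpr (Nat.sub_lt hKpos one_pos))
  have hkerφ : ∃ g : Lk, g ≠ 0 ∧ φ g = 0 := by
    rw [← LinearMap.ker_eq_bot] at hφnotinj
    obtain ⟨g, hgmem, hgne⟩ := Submodule.ne_bot_iff _ |>.mp hφnotinj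
    exact ⟨g, hgne, hgmem⟩
  obtain ⟨g, hgne, hgφ⟩ := hkerφ
  set f : D := (g : D) with hf
  have hfL : f ∈ Lk := g.2
  have hf0 : f ≠ 0 := fun h => hgne (Subtype.ext h)
  have horth : ∀ j : ℕ+, j < k → c f j = 0 := by
    intro j hj
    have hjK : (j : ℕ) < K := by exact_mod_cast hj
    have hi : (j : ℕ) - 1 < K - 1 := Nat.sub_lt_sub_right j.one_le hjK
    have := congrFun hgφ ⟨(j : ℕ) - 1, hi⟩
    simp only [hφ, LinearMap.coe_mk, AddHom.coe_mk, Pi.zero_apply] at this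
    have hjeq : (⟨(j : ℕ) - 1 + 1, Nat.succ_pos _⟩ : ℕ+) = j := by
      ext
      simp only [PNat.mk_coe]
      exact Nat.succ_pred_eq_of_pos j.pos
    rw [hcdef]
    simpa [hjeq] using this
  -- the key inequality for f
  have hGf : 0 < (inner ℂ ((f : D) : H) (T f) : ℂ).re := hden f (hTne f hfL hf0)
  have hkey : lam k * (inner ℂ ((f : D) : H) (T f) : ℂ).re ≤ ‖T f‖ ^ 2 := by
    refine hasSum_le (fun j => ?_) ((h2 f).mul_left (lam k)) (h3 f)
    rcases eq_or_ne (c f j) 0 with h | h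
    · simp [h]
    · have hjk : k ≤ j := by
        by_contra hlt
        push_neg at hlt
        exact h (horth j hlt)
      have : lam k ≤ lam j := hmono hjk
      have hnn : 0 ≤ lam j * ‖c f j‖ ^ 2 := mul_nonneg (hpos j).le (by positivity)
      calc lam k * (lam j * ‖c f j‖ ^ 2) ≤ lam j * (lam j * ‖c f j‖ ^ 2) :=
            mul_le_mul_of_nonneg_right this hnn
        _ = (lam j) ^ 2 * ‖c f j‖ ^ 2 := by ring
  have hq : lam k ≤ ‖T f‖ ^ 2 / (inner ℂ ((f : D) : H) (T f) : ℂ).re :=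
    (le_div_iff₀ hGf).mpr hkey
  exact hq.trans (le_csSup hbdd ⟨f, hfL, hf0, rfl⟩)
end

section
/- Eigenvalue comparison from Rayleigh-quotient comparison (the abstract mechanism of Theorem 1.1): In the setting below, suppose that for some constants a > 0 and b ≥ 0 one has ‖T̂ f‖² / ⟨T̂ f, f⟩ ≤ a · ( √(‖T f‖² / ⟨T f, f⟩) + b )² for every f ∈ D with T f ≠ 0. Then √(λ̂_k) ≤ √a · ( √(λ_k) + b ) for every integer k ≥ 1. -/
open scoped ComplexConjugate


private lemma coeff_extract' {H : Type*} [NormedAddCommGroup H] [InnerProductSpace ℂ H]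
    (v : ℕ+ → H) (hv : Orthonormal ℂ v) (c : ℕ+ → ℂ) (s : H)
    (hs : HasSum (fun j => c j • v j) s) (i : ℕ+) : (inner ℂ (v i) s : ℂ) = c i := by
  have h := (innerSL ℂ (v i)).hasSum hs
  have h2 : HasSum (fun j : ℕ+ => (if j = i then c i else 0)) (c i) := hasSum_ite_eq i (c i)
  have h3 : HasSum (fun j : ℕ+ => (if j = i then c i else 0)) (inner ℂ (v i) s : ℂ) := by
    convert h using 2 with j
    · rfl
    simp only [innerSL_apply_apply, inner_smul_right]
    rw [orthonormal_iff_ite.mp hv]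
    rcases eq_or_ne j i with rfl|hne
    · simp
    · simp [hne, Ne.symm hne]
    · rfl
  exact h3.unique h2

private lemma norm_sq_hasSum' {H : Type*} [NormedAddCommGroup H] [InnerProductSpace ℂ H]
    (v : ℕ+ → H) (hv : Orthonormal ℂ v) (c : ℕ+ → ℂ) (s : H)
    (hs : HasSum (fun j => c j • v j) s) : HasSum (fun j => ‖c j‖ ^ 2) (‖s‖ ^ 2) := by
  have h := (innerSL ℂ s).hasSum hs
  have h1 : HasSum (fun j : ℕ+ => ((‖c j‖ : ℂ) ^ 2)) (inner ℂ s s : ℂ) := by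
    convert h using 2 with j
    · rfl
    rw [innerSL_apply_apply, inner_smul_right, ← inner_conj_symm, coeff_extract' v hv c s hs j,
      Complex.mul_conj]
    norm_cast
    rw [Complex.normSq_eq_norm_sq]
    norm_cast
  have h2 := Complex.reCLM.hasSum h1
  simp only [Complex.reCLM_apply] at h2
  have h3 : (inner ℂ s s : ℂ).re = ‖s‖ ^ 2 := by
    rw [inner_self_eq_norm_sq_to_K]; norm_cast
  rw [h3] at h2
  convert h2 using 2 with j
  norm_cast

private lemma re_inner_hasSum' {H : Type*} [NormedAddCommGroup H] [InnerProductSpace ℂ H]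
    (v : ℕ+ → H) (l : ℕ+ → ℝ) (f s : H)
    (hs : HasSum (fun j => ((l j : ℂ) * (inner ℂ (v j) f : ℂ)) • v j) s) :
    HasSum (fun j => l j * ‖(inner ℂ (v j) f : ℂ)‖ ^ 2) ((inner ℂ f s : ℂ).re) := by
  have h := (innerSL ℂ f).hasSum hs
  have h2 := Complex.reCLM.hasSum h
  convert h2 using 2 with j
  simp only [innerSL_apply_apply, inner_smul_right, Complex.reCLM_apply]
  rw [mul_assoc, ← inner_conj_symm f, Complex.mul_conj]
  norm_cast
  rw [Complex.normSq_eq_norm_sq]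
  simp

/-- Eigenvalue comparison from Rayleigh-quotient comparison (the abstract mechanism of
Theorem 1.1): if `‖T̂ f‖²/⟨T̂ f, f⟩ ≤ a (√(‖T f‖²/⟨T f, f⟩) + b)²` for every `f ∈ D` with
`T f ≠ 0`, then `√(λ̂_k) ≤ √a (√(λ_k) + b)` for every `k ≥ 1`. -/
theorem abstract_eigenvalue_comparison
    {H : Type*} [NormedAddCommGroup H] [InnerProductSpace ℂ H] [CompleteSpace H]
    (D : Submodule ℂ H)
    (e ehat : ℕ+ → H) (he : Orthonormal ℂ e) (hehat : Orthonormal ℂ ehat)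
    (heD : ∀ j, e j ∈ D) (hehatD : ∀ j, ehat j ∈ D)
    (lam lamhat : ℕ+ → ℝ)
    (hpos : ∀ j, 0 < lam j) (hmono : Monotone lam)
    (hposhat : ∀ j, 0 < lamhat j) (hmonohat : Monotone lamhat)
    (T That : D →ₗ[ℂ] H)
    (hT : ∀ f : D, HasSum (fun j : ℕ+ => ((lam j : ℂ) * (inner ℂ (e j) (f : H) : ℂ)) • e j) (T f))
    (hThat : ∀ f : D,
      HasSum (fun j : ℕ+ => ((lamhat j : ℂ) * (inner ℂ (ehat j) (f : H) : ℂ)) • ehat j) (That f))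
    (hker : LinearMap.ker T = LinearMap.ker That)
    (a b : ℝ) (ha : 0 < a) (hb : 0 ≤ b)
    (hcomp : ∀ f : D, T f ≠ 0 →
      ‖That f‖ ^ 2 / (inner ℂ ((f : D) : H) (That f) : ℂ).re ≤
        a * (Real.sqrt (‖T f‖ ^ 2 / (inner ℂ ((f : D) : H) (T f) : ℂ).re) + b) ^ 2) :
    ∀ k : ℕ+, Real.sqrt (lamhat k) ≤ Real.sqrt a * (Real.sqrt (lam k) + b) := by
  intro k
  -- index embeddings
  set ι : Fin (k : ℕ) → ℕ+ := fun i => ⟨i.1 + 1, Nat.succ_pos _⟩ with hι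
  have hιinj : Function.Injective ι := by
    intro i i' h
    have h2 : i.1 + 1 = i'.1 + 1 := congrArg PNat.val h
    exact Fin.ext (by omega)
  set κ : Fin ((k : ℕ) - 1) → ℕ+ := fun i => ⟨i.1 + 1, Nat.succ_pos _⟩ with hκ
  -- the matrix of constraints and a nonzero kernel vector
  set M : (Fin (k : ℕ) → ℂ) →ₗ[ℂ] (Fin ((k : ℕ) - 1) → ℂ) :=
    Matrix.mulVecLin (Matrix.of fun i j => (inner ℂ (ehat (κ i)) (e (ι j)) : ℂ)) with hM
  have hnotinj : ¬ Function.Injective M := by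
    intro hinj
    have h1 := LinearMap.finrank_le_finrank_of_injective hinj
    rw [Module.finrank_fintype_fun_eq_card, Module.finrank_fintype_fun_eq_card,
      Fintype.card_fin, Fintype.card_fin] at h1
    have h2 : k.val ≤ k.val - 1 := h1
    have h3 : 1 ≤ k.val := k.2
    omega
  have hkerM : LinearMap.ker M ≠ ⊥ := by
    intro h
    exact hnotinj (LinearMap.ker_eq_bot.mp h)
  obtain ⟨c, hcker, hc0⟩ := Submodule.exists_mem_ne_zero_of_ne_bot hkerM
  have hMc : ∀ i, ∑ j : Fin (k : ℕ), (inner ℂ (ehat (κ i)) (e (ι j)) : ℂ) * c j = 0 := by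
    intro i
    have := congrFun (LinearMap.mem_ker.mp hcker) i
    simpa [hM, Matrix.mulVecLin, Matrix.mulVec, dotProduct] using this
  -- the test vector f
  set f : D := ∑ i : Fin (k : ℕ), c i • (⟨e (ι i), heD (ι i)⟩ : D) with hf
  have hfH : (f : H) = ∑ i : Fin (k : ℕ), c i • e (ι i) := by
    simp [hf]
  -- coefficients of f
  set cf : ℕ+ → ℂ := fun j => (inner ℂ (e j) (f : H) : ℂ) with hcf
  set chat : ℕ+ → ℂ := fun j => (inner ℂ (ehat j) (f : H) : ℂ) with hchat
  have hcfeq : ∀ j : ℕ+, cf j = ∑ i : Fin (k : ℕ), c i * (if j = ι i then 1 else 0) := by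
    intro j
    rw [hcf]
    simp only [hfH, inner_sum, inner_smul_right]
    congr 1; ext i
    rw [orthonormal_iff_ite.mp he]
  have hcfι : ∀ i, cf (ι i) = c i := by
    intro i
    rw [hcfeq]
    rw [Finset.sum_eq_single i]
    · simp
    · intro i' _ hne
      have : ι i ≠ ι i' := fun h => hne (hιinj h).symm
      simp [this]
    · simp
  have hcf0 : ∀ j : ℕ+, (k : ℕ) < (j : ℕ) → cf j = 0 := by
    intro j hj
    rw [hcfeq]
    apply Finset.sum_eq_zero
    intro i _
    have : j ≠ ι i := by
      intro h
      have h2 : j.val = i.1 + 1 := congrArg PNat.val h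
      have h3 : i.1 < k.val := i.2
      have h4 : k.val < j.val := hj
      omega
    simp [this]
  have hchat0 : ∀ j : ℕ+, (j : ℕ) < (k : ℕ) → chat j = 0 := by
    intro j hj
    have hj1 : (j : ℕ) - 1 < (k : ℕ) - 1 := by
      have h1 : j.val < k.val := hj
      have h2 : 1 ≤ j.val := j.2
      show j.val - 1 < k.val - 1
      omega
    have hjκ : j = κ ⟨(j : ℕ) - 1, hj1⟩ := by
      apply PNat.coe_injective
      show j.val = j.val - 1 + 1
      have h2 : 1 ≤ j.val := j.2
      omega
    have := hMc ⟨(j : ℕ) - 1, hj1⟩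
    rw [hchat, hjκ]
    simp only [hfH, inner_sum, inner_smul_right]
    rw [← this]
    congr 1; ext i; ring
  -- T f and its properties
  obtain ⟨i₀, hi₀⟩ : ∃ i, c i ≠ 0 := by
    by_contra hall
    push_neg at hall
    exact hc0 (funext hall)
  have hTf := hT f
  have hTfcoeff := coeff_extract' e he _ _ hTf
  have hTfne : T f ≠ 0 := by
    intro h0
    have := hTfcoeff (ι i₀)
    rw [h0, inner_zero_right] at this
    have h2 : (lam (ι i₀) : ℂ) * cf (ι i₀) = 0 := this.symm
    rw [hcfι] at h2
    rcases mul_eq_zero.mp h2 with h|h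
    · exact absurd h (by exact_mod_cast (hpos (ι i₀)).ne')
    · exact hi₀ h
  have hThatfne : That f ≠ 0 := by
    intro h0
    have : f ∈ LinearMap.ker That := LinearMap.mem_ker.mpr h0
    rw [← hker] at this
    exact hTfne (LinearMap.mem_ker.mp this)
  -- the Rayleigh quotient sums
  have hreT : HasSum (fun j => lam j * ‖cf j‖ ^ 2) ((inner ℂ (f : H) (T f) : ℂ).re) :=
    re_inner_hasSum' e lam (f : H) (T f) (hT f)
  have hreThat : HasSum (fun j => lamhat j * ‖chat j‖ ^ 2) ((inner ℂ (f : H) (That f) : ℂ).re) :=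
    re_inner_hasSum' ehat lamhat (f : H) (That f) (hThat f)
  have hnT : HasSum (fun j => ‖(lam j : ℂ) * cf j‖ ^ 2) (‖T f‖ ^ 2) :=
    norm_sq_hasSum' e he _ _ (hT f)
  have hnThat : HasSum (fun j => ‖(lamhat j : ℂ) * chat j‖ ^ 2) (‖That f‖ ^ 2) :=
    norm_sq_hasSum' ehat hehat _ _ (hThat f)
  -- positivity of denominators
  have hterm_nonneg : ∀ j, 0 ≤ lam j * ‖cf j‖ ^ 2 := fun j =>
    mul_nonneg (hpos j).le (sq_nonneg _)
  have hP : 0 < (inner ℂ (f : H) (T f) : ℂ).re := by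
    have hle : lam (ι i₀) * ‖cf (ι i₀)‖ ^ 2 ≤ (inner ℂ (f : H) (T f) : ℂ).re :=
      le_hasSum hreT (ι i₀) (fun j _ => hterm_nonneg j)
    have : 0 < lam (ι i₀) * ‖cf (ι i₀)‖ ^ 2 := by
      apply mul_pos (hpos _)
      rw [hcfι]
      exact pow_pos (norm_pos_iff.mpr hi₀) 2
    linarith
  have hchatex : ∃ j, chat j ≠ 0 := by
    by_contra hall
    push_neg at hall
    apply hThatfne
    have : (fun j : ℕ+ => ((lamhat j : ℂ) * (inner ℂ (ehat j) (f : H) : ℂ)) • ehat j)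
        = fun _ => (0 : H) := by
      funext j
      rw [show (inner ℂ (ehat j) (f : H) : ℂ) = chat j from rfl, hall j]
      simp
    have h' := hThat f
    rw [this] at h'
    exact (hasSum_zero.unique h').symm
  obtain ⟨j₀, hj₀⟩ := hchatex
  have hPhat : 0 < (inner ℂ (f : H) (That f) : ℂ).re := by
    have hle : lamhat j₀ * ‖chat j₀‖ ^ 2 ≤ (inner ℂ (f : H) (That f) : ℂ).re :=
      le_hasSum hreThat j₀ (fun j _ => mul_nonneg (hposhat j).le (sq_nonneg _))
    have : 0 < lamhat j₀ * ‖chat j₀‖ ^ 2 := by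
      apply mul_pos (hposhat _)
      exact pow_pos (norm_pos_iff.mpr hj₀) 2
    linarith
  -- upper bound on ‖T f‖²
  have hNupper : ‖T f‖ ^ 2 ≤ lam k * (inner ℂ (f : H) (T f) : ℂ).re := by
    refine hasSum_le (fun j => ?_) hnT (hreT.mul_left (lam k))
    rcases eq_or_ne (cf j) 0 with h|h
    · simp [h]
    · have hjk : j ≤ k := by
        by_contra hlt
        push_neg at hlt
        exact h (hcf0 j (by exact_mod_cast hlt))
      have h1 : lam j ≤ lam k := hmono hjk
      have h2 : ‖(lam j : ℂ) * cf j‖ ^ 2 = lam j * (lam j * ‖cf j‖ ^ 2) := by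
        rw [norm_mul]
        rw [Complex.norm_real, Real.norm_eq_abs, abs_of_pos (hpos j)]
        ring
      rw [h2]
      have := mul_le_mul_of_nonneg_right h1 (hterm_nonneg j)
      linarith [this]
  -- lower bound on ‖That f‖²
  have hNlower : lamhat k * (inner ℂ (f : H) (That f) : ℂ).re ≤ ‖That f‖ ^ 2 := by
    refine hasSum_le (fun j => ?_) (hreThat.mul_left (lamhat k)) hnThat
    rcases eq_or_ne (chat j) 0 with h|h
    · simp [h]
    · have hjk : k ≤ j := by
        by_contra hlt
        push_neg at hlt
        exact h (hchat0 j (by exact_mod_cast hlt))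
      have h1 : lamhat k ≤ lamhat j := hmonohat hjk
      have h2 : ‖(lamhat j : ℂ) * chat j‖ ^ 2 = lamhat j * (lamhat j * ‖chat j‖ ^ 2) := by
        rw [norm_mul, Complex.norm_real, Real.norm_eq_abs, abs_of_pos (hposhat j)]
        ring
      rw [h2]
      have := mul_le_mul_of_nonneg_right h1
        (mul_nonneg (hposhat j).le (sq_nonneg (‖chat j‖)))
      linarith [this]
  -- combine
  set P := (inner ℂ (f : H) (T f) : ℂ).re
  set Phat := (inner ℂ (f : H) (That f) : ℂ).re
  have hR : ‖T f‖ ^ 2 / P ≤ lam k := by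
    rw [div_le_iff₀ hP]
    linarith [hNupper]
  have hRhat : lamhat k ≤ ‖That f‖ ^ 2 / Phat := by
    rw [le_div_iff₀ hPhat]
    linarith [hNlower]
  have hcompf := hcomp f hTfne
  have hsqrtR : Real.sqrt (‖T f‖ ^ 2 / P) ≤ Real.sqrt (lam k) := Real.sqrt_le_sqrt hR
  have hfinal : lamhat k ≤ a * (Real.sqrt (lam k) + b) ^ 2 := by
    have h1 : a * (Real.sqrt (‖T f‖ ^ 2 / P) + b) ^ 2 ≤ a * (Real.sqrt (lam k) + b) ^ 2 := by
      apply mul_le_mul_of_nonneg_left _ ha.le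
      apply pow_le_pow_left₀ (by positivity)
      linarith
    calc lamhat k ≤ ‖That f‖ ^ 2 / Phat := hRhat
      _ ≤ a * (Real.sqrt (‖T f‖ ^ 2 / P) + b) ^ 2 := hcompf
      _ ≤ a * (Real.sqrt (lam k) + b) ^ 2 := h1
  calc Real.sqrt (lamhat k) ≤ Real.sqrt (a * (Real.sqrt (lam k) + b) ^ 2) :=
        Real.sqrt_le_sqrt hfinal
    _ = Real.sqrt a * (Real.sqrt (lam k) + b) := by
        rw [Real.sqrt_mul ha.le, Real.sqrt_sq (by positivity)]
end
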